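/- arXiv:2106.11788 — 3 statements merged into one kernel-verified Lean document; each statement's English description precedes it below -/
import Mathlib

section
/- If there exists a normed (monic) null-polynomial modulo n of degree m, then n divides m!. Consequently, no monic polynomial of degree strictly less than s(n) can vanish modulo n at all integers. -/
open Polynomial

noncomputable def smarandache (n : ℕ) : ℕ := sInf {k : ℕ | n ∣ Nat.factorial k}

theorem dvd_fwdDiff_iter_of_forall_dvd {M R : Type*} [AddCommMonoid M] [CommRing R]
    {d : R} (a : M) (k : ℕ) {f : M → R} (hf : ∀ x, d ∣ f x) (y : M) :
    d ∣ (fwdDiff a)^[k] f y := by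
  induction k generalizing f with
  | zero => exact hf y
  | succ k ih => exact ih fun x ↦ dvd_sub (hf (x + a)) (hf x)

/-- The `deg P`-th forward difference of `P` is the constant `lc P * (deg P)!`, and forward
differences of a function with values in `d R` stay in `d R`. -/
theorem dvd_leadingCoeff_mul_factorial_of_forall_dvd_eval {R : Type*} [CommRing R]
    {d : R} {P : R[X]} (hP : ∀ x, d ∣ P.eval x) :
    d ∣ P.leadingCoeff * (P.natDegree.factorial : R) := by
  have hdiff := congr_fun P.fwdDiff_iter_degree_eq_factorial 0
  simp only [Pi.smul_apply, Pi.natCast_apply, smul_eq_mul] at hdiff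
  exact hdiff ▸ dvd_fwdDiff_iter_of_forall_dvd 1 P.natDegree hP 0

theorem monic_null_polynomial_degree_general (n : ℕ)
    (p : Polynomial ℤ) (hp : p.Monic) (h : ∀ x : ℤ, (n : ℤ) ∣ p.eval x) :
    n ∣ Nat.factorial p.natDegree ∧ ¬ p.natDegree < smarandache n := by
  have hdvd : n ∣ p.natDegree.factorial := by
    have := dvd_leadingCoeff_mul_factorial_of_forall_dvd_eval h
    rwa [hp.leadingCoeff, one_mul, Int.natCast_dvd_natCast] at this
  exact ⟨hdvd, not_lt.mpr (Nat.sInf_le hdvd)⟩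

/-- If a monic integer polynomial vanishes modulo `n` at every integer, then
`n` divides `(deg p)!`; consequently its degree cannot be less than `s(n)`. -/
theorem monic_null_polynomial_degree (n : ℕ) (hn : 2 ≤ n)
    (p : Polynomial ℤ) (hp : p.Monic) (h : ∀ x : ℤ, (n : ℤ) ∣ p.eval x) :
    n ∣ Nat.factorial p.natDegree ∧ ¬ p.natDegree < smarandache n :=
  monic_null_polynomial_degree_general n p hp h
end

section
/- For a prime p and m ∈ ℕ with m ≤ p, the number of polyfunctions over ℤ/p^mℤ equals p^{p·C(m+1,2)} = p^{p·m(m+1)/2}. -/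
open Polynomial Finset
open scoped Nat

/-!
Every polynomial over `ℤ/nℤ` is a combination of the falling factorials
`(x)_k = x (x - 1) ⋯ (x - k + 1)`. Since `k!` divides `(x)_k` at every integer `x`, the
coefficient of `(x)_k` only matters modulo `n / gcd(n, k!)`, and evaluating at `x = 0, 1, 2, …`
recovers these residues one at a time. Hence `Ψ(n) = ∏_{k < N} n / gcd(n, k!)` for any `N`
with `n ∣ N!`. For `n = p^m` with `m ≤ p` take `N = pm`: by Legendre's formula
`v_p(k!) = ⌊k/p⌋` for `k < p²`, so the `k`-th factor is `p^(m - ⌊k/p⌋)` and the product is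
`p^(p (m + ⋯ + 2 + 1))`.
-/

/-- The number of polyfunctions over `ℤ/nℤ`. -/
noncomputable def Psi (n : ℕ) : ℕ :=
  Nat.card {f : ZMod n → ZMod n // ∃ p : Polynomial (ZMod n), ∀ x, p.eval x = f x}

namespace Polynomial

variable {R : Type*} [CommRing R]

theorem X_mul_descPochhammer (k : ℕ) :
    X * descPochhammer R k = descPochhammer R (k + 1) + (k : R) • descPochhammer R k := by
  rw [descPochhammer_succ_right, smul_eq_C_mul, map_natCast]
  ring

theorem span_range_descPochhammer : Submodule.span R (Set.range (descPochhammer R)) = ⊤ := by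
  set S := Submodule.span R (Set.range (descPochhammer R))
  have X_mul_mem : ∀ q ∈ S, X * q ∈ S := by
    intro q hq
    induction hq using Submodule.span_induction with
    | mem _ h =>
      obtain ⟨k, rfl⟩ := h
      rw [X_mul_descPochhammer]
      exact add_mem (Submodule.subset_span ⟨k + 1, rfl⟩)
        (S.smul_mem _ (Submodule.subset_span ⟨k, rfl⟩))
    | zero => simp
    | add _ _ _ _ h h' => rw [mul_add]; exact add_mem h h'
    | smul a _ _ h => rw [mul_smul_comm]; exact S.smul_mem a h
  have X_pow_mem : ∀ k, (X ^ k : R[X]) ∈ S := by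
    intro k
    induction k with
    | zero => exact Submodule.subset_span ⟨0, descPochhammer_zero R⟩
    | succ k ih => rw [pow_succ']; exact X_mul_mem _ ih
  refine Submodule.eq_top_iff'.mpr fun P => ?_
  induction P using Polynomial.induction_on' with
  | add _ _ h h' => exact add_mem h h'
  | monomial k a =>
    rw [← C_mul_X_pow_eq_monomial, ← smul_eq_C_mul]
    exact S.smul_mem a (X_pow_mem k)

end Polynomial

namespace ZMod

variable {n : ℕ} [NeZero n]

theorem eval_descPochhammer (k : ℕ) (x : ZMod n) :
    (descPochhammer (ZMod n) k).eval x = (x.val.descFactorial k : ZMod n) := by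
  rw [← descPochhammer_eval_eq_descFactorial, natCast_zmod_val]

theorem natCast_div_gcd_factorial_mul_eval_descPochhammer (k : ℕ) (x : ZMod n) :
    ((n / n.gcd k ! : ℕ) : ZMod n) * (descPochhammer (ZMod n) k).eval x = 0 := by
  rw [eval_descPochhammer, ← Nat.cast_mul, natCast_eq_zero_iff]
  refine Dvd.dvd.trans ⟨k ! / n.gcd k !, ?_⟩
    (mul_dvd_mul_left _ (Nat.factorial_dvd_descFactorial _ _))
  rw [← Nat.mul_div_assoc _ (Nat.gcd_dvd_right n _),
    Nat.div_mul_right_comm (Nat.gcd_dvd_left n _)]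

theorem eval_descPochhammer_eq_zero {k : ℕ} (hk : n ∣ k !) (x : ZMod n) :
    (descPochhammer (ZMod n) k).eval x = 0 := by
  simpa [Nat.gcd_eq_left hk, Nat.div_self (NeZero.pos n)] using
    natCast_div_gcd_factorial_mul_eval_descPochhammer k x

theorem natCast_mod_mul_eval_descPochhammer (c k : ℕ) (x : ZMod n) :
    ((c % (n / n.gcd k !) : ℕ) : ZMod n) * (descPochhammer (ZMod n) k).eval x =
      c * (descPochhammer (ZMod n) k).eval x := by
  conv_rhs => rw [← Nat.mod_add_div c (n / n.gcd k !)]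
  push_cast
  linear_combination (-((c / (n / n.gcd k !) : ℕ) : ZMod n)) *
    natCast_div_gcd_factorial_mul_eval_descPochhammer k x

theorem eq_of_natCast_mul_eq_of_lt_div_gcd {a b c : ℕ} (ha : a < n / n.gcd c)
    (hb : b < n / n.gcd c) (h : (a * c : ZMod n) = b * c) : a = b := by
  rw [← Nat.cast_mul, ← Nat.cast_mul, natCast_eq_natCast_iff] at h
  exact (h.cancel_right_div_gcd (NeZero.pos n)).eq_of_lt_of_lt ha hb

theorem eq_of_forall_sum_mul_eval_descPochhammer_eq {N : ℕ} {b b' : Fin N → ℕ}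
    (hb : ∀ k, b k < n / n.gcd (k : ℕ)!) (hb' : ∀ k, b' k < n / n.gcd (k : ℕ)!)
    (h : ∀ x : ZMod n, ∑ k, (b k : ZMod n) * (descPochhammer (ZMod n) k).eval x =
      ∑ k, (b' k : ZMod n) * (descPochhammer (ZMod n) k).eval x) :
    b = b' := by
  funext j
  induction j using WellFoundedLT.induction with
  | _ j ih =>
    have hj := h (j : ℕ)
    simp only [descPochhammer_eval_eq_descFactorial] at hj
    rw [← sub_eq_zero, ← sum_sub_distrib, sum_eq_single j] at hj
    · rw [sub_eq_zero, Nat.descFactorial_self] at hj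
      exact eq_of_natCast_mul_eq_of_lt_div_gcd (hb j) (hb' j) hj
    · intro k _ hkj
      rcases hkj.lt_or_gt with hlt | hgt
      · rw [ih k hlt, sub_self]
      · rw [Nat.descFactorial_eq_zero_iff_lt.mpr hgt, Nat.cast_zero, mul_zero, mul_zero,
          sub_self]
    · simp

theorem exists_sum_mul_eval_descPochhammer_eq {N : ℕ} (hN : n ∣ N !) (P : (ZMod n)[X]) :
    ∃ c : ∀ k : Fin N, Fin (n / n.gcd (k : ℕ)!), ∀ x,
      ∑ k, ((c k : ℕ) : ZMod n) * (descPochhammer (ZMod n) k).eval x = P.eval x := by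
  obtain ⟨a, rfl⟩ := Finsupp.mem_span_range_iff_exists_finsupp.mp
    (span_range_descPochhammer (R := ZMod n) ▸ Submodule.mem_top (x := P))
  have hd : ∀ k, 0 < n / n.gcd k ! := fun k =>
    Nat.div_pos (Nat.gcd_le_left _ (NeZero.pos n)) (Nat.gcd_pos_of_pos_left _ (NeZero.pos n))
  refine ⟨fun k => ⟨(a k).val % _, Nat.mod_lt _ (hd k)⟩, fun x => ?_⟩
  simp only [natCast_mod_mul_eval_descPochhammer, natCast_zmod_val, Finsupp.sum, eval_finsetSum,
    eval_smul, smul_eq_mul]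
  rw [Fin.sum_univ_eq_sum_range (fun k => a k * (descPochhammer (ZMod n) k).eval x),
    ← finsum_eq_sum_of_support_subset, ← finsum_eq_sum_of_support_subset]
  · intro k hk
    exact Finsupp.mem_support_iff.mpr (left_ne_zero_of_mul hk)
  · intro k hk
    by_contra hkN
    rw [coe_range, Set.mem_Iio, not_lt] at hkN
    exact hk (mul_eq_zero_of_right _
      (eval_descPochhammer_eq_zero (hN.trans (Nat.factorial_dvd_factorial hkN)) x))

end ZMod

theorem Psi_eq_prod_div_gcd_factorial {n N : ℕ} [NeZero n] (hN : n ∣ N !) :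
    Psi n = ∏ k ∈ range N, n / n.gcd k ! := by
  let E : (∀ k : Fin N, Fin (n / n.gcd (k : ℕ)!)) →
      {f : ZMod n → ZMod n // ∃ P : (ZMod n)[X], ∀ x, P.eval x = f x} := fun c =>
    ⟨fun x => ∑ k, ((c k : ℕ) : ZMod n) * (descPochhammer (ZMod n) k).eval x,
      ∑ k, C ((c k : ℕ) : ZMod n) * descPochhammer (ZMod n) k,
      fun x => by simp [eval_finsetSum]⟩
  have hE : E.Bijective := by
    refine ⟨fun c c' h => ?_, fun ⟨f, P, hP⟩ => ?_⟩
    · have := ZMod.eq_of_forall_sum_mul_eval_descPochhammer_eq (fun k => (c k).isLt)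
        (fun k => (c' k).isLt) (congrFun (congrArg Subtype.val h))
      exact funext fun k => Fin.ext (congrFun this k)
    · obtain ⟨c, hc⟩ := ZMod.exists_sum_mul_eval_descPochhammer_eq hN P
      exact ⟨c, Subtype.ext (funext fun x => (hc x).trans (hP x))⟩
  rw [Psi, ← Nat.card_eq_of_bijective E hE, Nat.card_pi]
  simp only [Nat.card_fin]
  exact Fin.prod_univ_eq_prod_range (fun k => n / n.gcd k !) N

namespace Nat

theorem padicValNat_factorial_of_lt_sq {p k : ℕ} [Fact p.Prime] (hk : k < p ^ 2) :
    padicValNat p k ! = k / p := by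
  rw [padicValNat_factorial (log_lt_of_lt_pow' two_ne_zero hk)]
  simp

theorem Prime.pow_gcd_eq_ordProj {p m a : ℕ} (hp : p.Prime) (ha : a ≠ 0)
    (h : a.factorization p ≤ m) : (p ^ m).gcd a = ordProj[p] a := by
  conv_lhs => rw [← ordProj_mul_ordCompl_eq_self a p, ← Nat.add_sub_cancel' h, pow_add]
  rw [gcd_mul_left, ((coprime_ordCompl hp ha).pow_left _).gcd_eq_one, mul_one]

theorem Prime.pow_div_gcd_factorial {p m k : ℕ} (hp : p.Prime) (hmp : m ≤ p) (hk : k < p * m) :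
    p ^ m / (p ^ m).gcd k ! = p ^ (m - k / p) := by
  have := Fact.mk hp
  have hkp : k < p ^ 2 := hk.trans_le (by rw [sq]; exact Nat.mul_le_mul_left p hmp)
  have hv : (k !).factorization p = k / p := by
    rw [factorization_def _ hp, padicValNat_factorial_of_lt_sq hkp]
  have hkm : k / p ≤ m := ((Nat.div_lt_iff_lt_mul hp.pos).mpr (by rwa [mul_comm])).le
  rw [hp.pow_gcd_eq_ordProj (factorial_ne_zero k) (hv ▸ hkm), hv, Nat.pow_div hkm hp.pos]

theorem Prime.pow_dvd_factorial_mul {p : ℕ} (hp : p.Prime) (m : ℕ) : p ^ m ∣ (p * m)! := by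
  have := Fact.mk hp
  rw [pow_dvd_iff_le_padicValNat hp.ne_one (factorial_ne_zero _), padicValNat_factorial_mul]
  exact le_add_self

theorem sum_range_sub_eq_choose_two (m : ℕ) : ∑ j ∈ range m, (m - j) = (m + 1).choose 2 := by
  induction m with
  | zero => rfl
  | succ m ih =>
    rw [sum_range_succ', choose_succ_succ', ← ih, choose_one_right, add_comm]
    simp

end Nat

theorem Finset.prod_range_mul_div {M : Type*} [CommMonoid M] (f : ℕ → M) (p m : ℕ) :
    ∏ k ∈ range (p * m), f (k / p) = ∏ j ∈ range m, f j ^ p := by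
  induction m with
  | zero => simp
  | succ m ih =>
    have hdiv : ∀ i ∈ range p, (p * m + i) / p = m := fun i hi => by
      rw [mem_range] at hi
      rw [Nat.mul_add_div (by omega), Nat.div_eq_of_lt hi, add_zero]
    rw [mul_add_one, prod_range_add, ih, prod_congr rfl fun i hi => congrArg f (hdiv i hi),
      prod_const, card_range, prod_range_succ]

theorem Psi_prime_pow_small_general (p : ℕ) (hp : p.Prime) (m : ℕ)
    (hmp : m ≤ p) : Psi (p ^ m) = p ^ (p * Nat.choose (m + 1) 2) := by
  have : NeZero (p ^ m) := ⟨pow_ne_zero _ hp.ne_zero⟩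
  rw [Psi_eq_prod_div_gcd_factorial (hp.pow_dvd_factorial_mul m),
    prod_congr rfl fun k hk => hp.pow_div_gcd_factorial hmp (mem_range.mp hk),
    prod_range_mul_div (fun j => p ^ (m - j)), prod_pow, prod_pow_eq_pow_sum,
    Nat.sum_range_sub_eq_choose_two, ← pow_mul, mul_comm]

/-- For `p` prime and `m ≤ p`, `Ψ(p^m) = p^{p⬝C(m+1,2)}`. -/
theorem Psi_prime_pow_small (p : ℕ) (hp : p.Prime) (m : ℕ) (hm : 0 < m)
    (hmp : m ≤ p) : Psi (p ^ m) = p ^ (p * Nat.choose (m + 1) 2) :=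
  Psi_prime_pow_small_general p hp m hmp
end

section
/- For k ∈ ℕ, the fraction of units among all polyfunctions over ℤ/3^kℤ is 8/27; equivalently, the number of invertible elements of the ring G(ℤ/3^kℤ) equals (2/3)^3 · Ψ(3^k), where Ψ(3^k) = 3^{∑_{i=1}^k s(3^i)}. -/
/-- The ring of polyfunctions over a commutative ring `R`. -/
noncomputable def polyfunRing (R : Type) [CommRing R] : Subring (R → R) :=
  (Pi.ringHom (fun x : R => Polynomial.evalRingHom x)).range

/-!
Over `ℤ/nℤ` the falling factorials `(x)_j = x(x-1)⋯(x-j+1)`, `j < s(n)`, span the polyfunctions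
(`x · (x)_j = (x)_{j+1} + j (x)_j`, and `(x)_j` vanishes identically once `n ∣ j!`), and
`∑ c_j (x)_j` is the zero function iff `j! c_j = 0` for all `j` (evaluate at `x = 0, 1, 2, …`).
Counting the kernel gives `Ψ(n) · ∏_{j < s(n)} gcd(n, j!) = n^{s(n)}`, i.e.
`Ψ(p^k) = p^{∑_{i ≤ k} s(p^i)}`.

A polyfunction `f` over `ℤ/p^kℤ` is a unit iff `f(x) ≢ 0 mod p` for every `x`, and `f(x) mod p`
depends only on `x mod p`. So reduction mod `p` is a surjective local ring map from `G(ℤ/p^kℤ)`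
onto all functions `𝔽_p → 𝔽_p`, and its fibres all have the size of its kernel: the units are
the preimage of the `(p-1)^p` nowhere vanishing functions among all `p^p`.
-/

open Polynomial Finset
open scoped Nat

section Smarandache

variable {n : ℕ}

lemma dvd_factorial_smarandache (hn : 0 < n) : n ∣ (smarandache n)! :=
  Nat.sInf_mem (s := {k | n ∣ k !}) ⟨n, Nat.dvd_factorial hn le_rfl⟩

lemma lt_smarandache_iff (hn : 0 < n) {j : ℕ} : j < smarandache n ↔ ¬ n ∣ j ! := by
  refine ⟨fun h hd => (Nat.sInf_le hd).not_gt h, fun hd => ?_⟩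
  by_contra h
  exact hd ((dvd_factorial_smarandache hn).trans (Nat.factorial_dvd_factorial (not_lt.mp h)))

lemma smarandache_mono {m : ℕ} (hn : 0 < n) (h : m ∣ n) : smarandache m ≤ smarandache n :=
  Nat.sInf_le (h.trans (dvd_factorial_smarandache hn))

end Smarandache

section FallingFactorial

variable {n : ℕ}

noncomputable def fallingFun (j : ℕ) : ZMod n → ZMod n :=
  fun x => (descPochhammer (ZMod n) j).eval x

lemma fallingFun_natCast (j m : ℕ) : fallingFun j (m : ZMod n) = m.descFactorial j :=
  descPochhammer_eval_eq_descFactorial (ZMod n) m j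

lemma fallingFun_zero : fallingFun 0 = (1 : ZMod n → ZMod n) := by
  funext x
  simp [fallingFun]

lemma id_mul_fallingFun (j : ℕ) :
    id * fallingFun j = fallingFun (j + 1) + (j : ZMod n) • fallingFun (n := n) j := by
  funext x
  simp only [fallingFun, descPochhammer_succ_right, eval_mul, eval_sub, eval_X, eval_natCast,
    Pi.mul_apply, Pi.add_apply, Pi.smul_apply, id, smul_eq_mul]
  ring

lemma fallingFun_mem_polyfunRing (j : ℕ) : fallingFun j ∈ polyfunRing (ZMod n) :=
  ⟨descPochhammer (ZMod n) j, rfl⟩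

variable (n) in
noncomputable def fallingComb : (Fin (smarandache n) → ZMod n) →ₗ[ZMod n] (ZMod n → ZMod n) :=
  Fintype.linearCombination (ZMod n) fun j => fallingFun j

lemma fallingComb_apply (c : Fin (smarandache n) → ZMod n) :
    fallingComb n c = ∑ j, c j • fallingFun j :=
  rfl

lemma fallingComb_natCast (c : Fin (smarandache n) → ZMod n) (m : ℕ) :
    fallingComb n c m = ∑ j, c j * m.descFactorial j := by
  simp only [fallingComb_apply, Finset.sum_apply, Pi.smul_apply, fallingFun_natCast, smul_eq_mul]

lemma factorial_smul_eq_zero_of_mem_ker {c : Fin (smarandache n) → ZMod n}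
    (hc : c ∈ LinearMap.ker (fallingComb n)) (j : Fin (smarandache n)) : (j : ℕ)! • c j = 0 := by
  obtain ⟨j, hj⟩ := j
  induction j using Nat.strong_induction_on with
  | _ j ih =>
    -- at `x = j` the terms with `i > j` vanish, and so by induction do those with `i < j`,
    -- because `i! ∣ j(j-1)⋯(j-i+1)`
    have hzero := congrFun (LinearMap.mem_ker.mp hc) j
    rw [fallingComb_natCast, Finset.sum_eq_single ⟨j, hj⟩] at hzero
    · simpa [Nat.descFactorial_self, mul_comm] using hzero
    · rintro ⟨i, hi⟩ _ hij
      rcases lt_or_gt_of_ne (Fin.val_ne_of_ne hij) with hlt | hgt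
      · rw [Nat.descFactorial_eq_factorial_mul_choose, Nat.cast_mul, ← mul_assoc, mul_comm (c _),
          ← nsmul_eq_mul, ih i hlt hi, zero_mul]
      · rw [Nat.descFactorial_eq_zero_iff_lt.mpr hgt, Nat.cast_zero, mul_zero]
    · exact fun h => (h (mem_univ _)).elim

variable [NeZero n]

lemma fallingFun_apply (j : ℕ) (x : ZMod n) :
    fallingFun j x = x.val.descFactorial j := by
  rw [← fallingFun_natCast, ZMod.natCast_zmod_val]

lemma fallingFun_eq_zero {j : ℕ} (hj : smarandache n ≤ j) : fallingFun (n := n) j = 0 := by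
  funext x
  rw [fallingFun_apply, Pi.zero_apply, ZMod.natCast_eq_zero_iff]
  exact (dvd_factorial_smarandache (NeZero.pos n)).trans
    ((Nat.factorial_dvd_factorial hj).trans (Nat.factorial_dvd_descFactorial _ _))

lemma fallingFun_mem_range (j : ℕ) : fallingFun j ∈ LinearMap.range (fallingComb n) := by
  rcases lt_or_ge j (smarandache n) with hj | hj
  · classical
    exact ⟨Pi.single ⟨j, hj⟩ 1, by simp [fallingComb]⟩
  · rw [fallingFun_eq_zero hj]
    exact zero_mem _

lemma id_mul_mem_range_fallingComb {f : ZMod n → ZMod n}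
    (hf : f ∈ LinearMap.range (fallingComb n)) : id * f ∈ LinearMap.range (fallingComb n) := by
  obtain ⟨c, rfl⟩ := hf
  rw [fallingComb_apply, Finset.mul_sum]
  refine Submodule.sum_mem _ fun j _ => ?_
  rw [mul_smul_comm, id_mul_fallingFun]
  exact Submodule.smul_mem _ _ (add_mem (fallingFun_mem_range _)
    (Submodule.smul_mem _ _ (fallingFun_mem_range _)))

lemma eval_mem_range_fallingComb (q : (ZMod n)[X]) :
    (fun x => q.eval x) ∈ LinearMap.range (fallingComb n) := by
  induction q using Polynomial.induction_on with
  | C a =>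
    convert Submodule.smul_mem _ a (fallingFun_mem_range 0) using 1
    funext x
    simp [fallingFun_zero]
  | add p q hp hq =>
    convert add_mem hp hq using 1
    funext x
    exact eval_add
  | monomial j a h =>
    convert id_mul_mem_range_fallingComb h using 1
    funext x
    simp only [eval_mul, eval_C, eval_pow, eval_X, Pi.mul_apply, id, pow_succ]
    ring

lemma coe_polyfunRing_eq_range_fallingComb :
    (polyfunRing (ZMod n) : Set (ZMod n → ZMod n)) = LinearMap.range (fallingComb n) := by
  refine Set.Subset.antisymm ?_ ?_
  · rintro _ ⟨q, rfl⟩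
    exact eval_mem_range_fallingComb q
  · rintro _ ⟨c, rfl⟩
    rw [fallingComb_apply]
    refine Subring.sum_mem _ fun j _ => ?_
    exact Subring.mul_mem _ ⟨C (c j), funext fun _ => eval_C⟩ (fallingFun_mem_polyfunRing _)

lemma mem_ker_fallingComb_iff (c : Fin (smarandache n) → ZMod n) :
    c ∈ LinearMap.ker (fallingComb n) ↔ ∀ j : Fin (smarandache n), (j : ℕ)! • c j = 0 := by
  refine ⟨factorial_smul_eq_zero_of_mem_ker, fun hc => ?_⟩
  rw [LinearMap.mem_ker, fallingComb_apply]
  refine Finset.sum_eq_zero fun j _ => ?_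
  funext x
  rw [Pi.smul_apply, fallingFun_apply, Nat.descFactorial_eq_factorial_mul_choose, Nat.cast_mul,
    smul_eq_mul, ← mul_assoc, mul_comm (c j), ← nsmul_eq_mul, hc j, zero_mul, Pi.zero_apply]

lemma card_ker_fallingComb :
    Nat.card (LinearMap.ker (fallingComb n)) = ∏ j ∈ range (smarandache n), n.gcd j ! := by
  let e : LinearMap.ker (fallingComb n) ≃
      ∀ j : Fin (smarandache n), (nsmulAddMonoidHom (α := ZMod n) (j : ℕ)!).ker :=
    (Equiv.subtypeEquivRight mem_ker_fallingComb_iff).trans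
      (Equiv.subtypePiEquivPi (p := fun (j : Fin (smarandache n)) (x : ZMod n) =>
        x ∈ (nsmulAddMonoidHom (α := ZMod n) (j : ℕ)!).ker))
  rw [Nat.card_congr e, Nat.card_pi,
    Fin.prod_univ_eq_prod_range (fun j => Nat.card (nsmulAddMonoidHom (α := ZMod n) j !).ker)]
  simp only [IsAddCyclic.card_nsmulAddMonoidHom_ker, Nat.card_zmod]

theorem card_polyfunRing_mul_prod_gcd :
    Nat.card (polyfunRing (ZMod n)) * ∏ j ∈ range (smarandache n), n.gcd j ! =
      n ^ smarandache n := by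
  let L := (fallingComb n).toAddMonoidHom
  have hG : Nat.card (polyfunRing (ZMod n)) = Nat.card L.range :=
    Nat.card_congr (Equiv.setCongr coe_polyfunRing_eq_range_fallingComb)
  have hK : Nat.card (LinearMap.ker (fallingComb n)) = Nat.card L.ker := rfl
  rw [hG, ← card_ker_fallingComb, hK, ← AddSubgroup.index_ker, mul_comm,
    AddSubgroup.card_mul_index, Nat.card_fun, Nat.card_zmod, Nat.card_eq_fintype_card,
    Fintype.card_fin]

end FallingFactorial

section PrimePower

variable {p : ℕ}

lemma gcd_prime_pow_mul_pow_card_filter (hp : p.Prime) (k : ℕ) {m : ℕ} (hm : m ≠ 0) :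
    (p ^ k).gcd m * p ^ #{i ∈ Icc 1 k | ¬ p ^ i ∣ m} = p ^ k := by
  set v := m.factorization p
  have hdvd_iff (i : ℕ) : p ^ i ∣ m ↔ i ≤ v := hp.pow_dvd_iff_le_factorization hm
  have hgcd : (p ^ k).gcd m = p ^ min k v := by
    obtain ⟨t, -, ht⟩ := (Nat.dvd_prime_pow hp).mp (Nat.gcd_dvd_left (p ^ k) m)
    have hmin : p ^ min k v ∣ p ^ t :=
      ht ▸ Nat.dvd_gcd (pow_dvd_pow p (min_le_left k v)) ((hdvd_iff _).mpr (min_le_right k v))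
    have htv : t ≤ v := (hdvd_iff t).mp (ht ▸ Nat.gcd_dvd_right (p ^ k) m)
    have htk : t ≤ k := (Nat.pow_dvd_pow_iff_le_right hp.one_lt).mp (ht ▸ Nat.gcd_dvd_left _ _)
    rw [ht, le_antisymm (le_min htk htv) ((Nat.pow_dvd_pow_iff_le_right hp.one_lt).mp hmin)]
  have hfilter : {i ∈ Icc 1 k | ¬ p ^ i ∣ m} = Icc (v + 1) k := by
    ext i
    simp only [mem_filter, mem_Icc, hdvd_iff]
    omega
  rw [hgcd, hfilter, Nat.card_Icc, ← pow_add]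
  congr 1
  omega

lemma sum_card_filter_not_dvd_factorial (hp : 0 < p) (k : ℕ) :
    ∑ j ∈ range (smarandache (p ^ k)), #{i ∈ Icc 1 k | ¬ p ^ i ∣ j !} =
      ∑ i ∈ Icc 1 k, smarandache (p ^ i) := by
  simp only [card_filter]
  rw [sum_comm]
  refine sum_congr rfl fun i hi => ?_
  have hle : smarandache (p ^ i) ≤ smarandache (p ^ k) :=
    smarandache_mono (pow_pos hp k) (pow_dvd_pow p (mem_Icc.mp hi).2)
  rw [← card_filter, ← card_range (smarandache (p ^ i))]
  congr 1
  ext j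
  rw [mem_filter, mem_range, mem_range, ← lt_smarandache_iff (pow_pos hp i)]
  omega

theorem card_polyfunRing_prime_pow (hp : p.Prime) (k : ℕ) :
    Nat.card (polyfunRing (ZMod (p ^ k))) = p ^ ∑ i ∈ Icc 1 k, smarandache (p ^ i) := by
  have : NeZero (p ^ k) := ⟨pow_ne_zero k hp.ne_zero⟩
  have hprod_pos : 0 < ∏ j ∈ range (smarandache (p ^ k)), (p ^ k).gcd j ! :=
    prod_pos fun j _ => Nat.gcd_pos_of_pos_left _ (pow_pos hp.pos k)
  refine Nat.eq_of_mul_eq_mul_right hprod_pos ?_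
  rw [card_polyfunRing_mul_prod_gcd, ← sum_card_filter_not_dvd_factorial hp.pos,
    ← prod_pow_eq_pow_sum, ← prod_mul_distrib, prod_congr rfl fun j _ => (mul_comm _ _).trans
      (gcd_prime_pow_mul_pow_card_filter hp k (Nat.factorial_ne_zero j)), prod_const, card_range]

end PrimePower

theorem IsUnit.of_map_of_injective_of_finite {M N F : Type*} [Monoid M] [Finite M] [Monoid N]
    [FunLike F M N] [MonoidHomClass F M N] {f : F} (hf : Function.Injective f) {x : M}
    (hx : IsUnit (f x)) : IsUnit x :=
  IsLeftRegular.isUnit_of_finite fun a b hab =>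
    hf (hx.isRegular.left (show f x * f a = f x * f b by simp only [← map_mul, hab]))

theorem AddMonoidHom.card_preimage_of_surjective {A B : Type*} [AddGroup A] [AddGroup B]
    (f : A →+ B) (hf : Function.Surjective f) (t : Set B) :
    Nat.card (f ⁻¹' t) = Nat.card f.ker * Nat.card t := by
  let e := QuotientAddGroup.quotientKerEquivOfSurjective f hf
  have hpre : f ⁻¹' t = ((↑) : A → A ⧸ f.ker) ⁻¹' (e ⁻¹' t) := rfl
  rw [hpre, Nat.card_congr (QuotientAddGroup.preimageMkEquivAddSubgroupProdSet _ _),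
    Nat.card_prod, Nat.card_preimage_of_injective e.injective (by simp [e.surjective.range_eq])]

theorem card_units_mul_card_of_surjective {R S : Type*} [Ring R] [Ring S] (f : R →+* S)
    [IsLocalHom f] (hf : Function.Surjective f) :
    Nat.card Rˣ * Nat.card S = Nat.card Sˣ * Nat.card R := by
  have hR : Nat.card Rˣ = Nat.card (f ⁻¹' {y | IsUnit y}) := by
    rw [← Nat.card_range_of_injective Units.val_injective]
    exact Nat.card_congr (Equiv.setCongr (Set.ext fun x => (isUnit_map_iff f x).symm))
  have hS : Nat.card Sˣ = Nat.card {y : S | IsUnit y} :=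
    (Nat.card_range_of_injective Units.val_injective).symm
  have hcard (t : Set S) : Nat.card (f ⁻¹' t) = Nat.card f.toAddMonoidHom.ker * Nat.card t :=
    f.toAddMonoidHom.card_preimage_of_surjective hf t
  rw [hR, hS, ← Nat.card_univ (α := R), ← Set.preimage_univ (f := f), ← Nat.card_univ (α := S),
    hcard, hcard]
  ring

section Reduction

variable {m n : ℕ}

theorem polyfunRing_eq_top (F : Type) [Field F] [Fintype F] : polyfunRing F = ⊤ := by
  classical
  refine eq_top_iff.mpr fun g _ => ⟨Lagrange.interpolate univ id g, funext fun x => ?_⟩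
  exact Lagrange.eval_interpolate_at_node g (Set.injOn_id _) (mem_univ x)

noncomputable def reduceFun (h : m ∣ n) : (ZMod n → ZMod n) →+* (ZMod m → ZMod m) :=
  RingHom.pi fun y => (ZMod.castHom h (ZMod m)).comp (Pi.evalRingHom _ (y.val : ZMod n))

lemma reduceFun_eval [NeZero m] (h : m ∣ n) (q : (ZMod n)[X]) :
    reduceFun h (fun x => q.eval x) = fun y => (q.map (ZMod.castHom h (ZMod m))).eval y := by
  funext y
  show ZMod.castHom h (ZMod m) (q.eval (y.val : ZMod n)) = _
  rw [← eval_map_apply, map_natCast, ZMod.natCast_zmod_val]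

noncomputable def reducePolyfun (h : m ∣ n) : polyfunRing (ZMod n) →+* (ZMod m → ZMod m) :=
  (reduceFun h).comp (polyfunRing (ZMod n)).subtype

lemma reducePolyfun_apply_castHom [NeZero m] (h : m ∣ n) (f : polyfunRing (ZMod n))
    (x : ZMod n) :
    reducePolyfun h f (ZMod.castHom h (ZMod m) x) =
      ZMod.castHom h (ZMod m) ((f : ZMod n → ZMod n) x) := by
  obtain ⟨_, ⟨q, rfl⟩⟩ := f
  show reduceFun h (fun x => q.eval x) _ = _
  rw [reduceFun_eval]
  exact eval_map_apply _ _

lemma reducePolyfun_surjective [Fact m.Prime] (h : m ∣ n) :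
    Function.Surjective (reducePolyfun h) := by
  intro g
  obtain ⟨q, hq⟩ : g ∈ polyfunRing (ZMod m) := (polyfunRing_eq_top (ZMod m)).symm ▸ trivial
  obtain ⟨q', rfl⟩ := map_surjective _ (ZMod.castHom_surjective h) q
  exact ⟨⟨_, q', rfl⟩, (reduceFun_eval h q').trans hq⟩

variable {p k : ℕ} [NeZero p]

lemma isUnit_castHom_iff (hk : k ≠ 0) {x : ZMod (p ^ k)} :
    IsUnit (ZMod.castHom (dvd_pow_self p hk) (ZMod p) x) ↔ IsUnit x := by
  rw [← ZMod.natCast_zmod_val x, map_natCast, ZMod.isUnit_iff_coprime, ZMod.isUnit_iff_coprime,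
    Nat.coprime_pow_right_iff (Nat.pos_of_ne_zero hk)]

lemma isLocalHom_reducePolyfun (hk : k ≠ 0) : IsLocalHom (reducePolyfun (dvd_pow_self p hk)) := by
  refine ⟨fun f hf => IsUnit.of_map_of_injective_of_finite (f := (polyfunRing _).subtype)
    Subtype.val_injective (Pi.isUnit_iff.mpr fun x => ?_)⟩
  rw [← isUnit_castHom_iff hk, Subring.coe_subtype, ← reducePolyfun_apply_castHom]
  exact Pi.isUnit_iff.mp hf _

end Reduction

lemma card_units_fun_zmod (p : ℕ) [Fact p.Prime] : Nat.card (ZMod p → ZMod p)ˣ = (p - 1) ^ p := by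
  rw [Nat.card_congr MulEquiv.piUnits.toEquiv, Nat.card_fun, Nat.card_eq_fintype_card,
    ZMod.card_units, Nat.card_zmod]

theorem card_units_polyfunRing_prime_pow {p k : ℕ} (hp : p.Prime) (hk : k ≠ 0) :
    p ^ p * Nat.card (polyfunRing (ZMod (p ^ k)))ˣ =
      (p - 1) ^ p * p ^ ∑ i ∈ Icc 1 k, smarandache (p ^ i) := by
  have : Fact p.Prime := ⟨hp⟩
  have := isLocalHom_reducePolyfun (p := p) hk
  have h := card_units_mul_card_of_surjective _ (reducePolyfun_surjective (dvd_pow_self p hk))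
  rw [Nat.card_fun, Nat.card_zmod, card_units_fun_zmod, card_polyfunRing_prime_pow hp] at h
  rw [mul_comm, h]

/-- The fraction of units among all polyfunctions over `ℤ/3^kℤ` is `8/27`:
`27 ⬝ |U_{3^k}| = 8 ⬝ Ψ(3^k)` where `Ψ(3^k) = 3^{∑_{i=1}^k s(3^i)}`. -/
theorem units_of_polyfunctions_mod_three_pow (k : ℕ) (hk : 1 ≤ k) :
    27 * Nat.card ((polyfunRing (ZMod (3 ^ k)))ˣ)
      = 8 * 3 ^ (∑ i ∈ Finset.Icc 1 k, smarandache (3 ^ i)) := by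
  simpa using card_units_polyfunRing_prime_pow Nat.prime_three (Nat.one_le_iff_ne_zero.mp hk)
end
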